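/- Let α > 0 and let I ⊆ ℝ be an open interval. If f has an indefinite MC^α integral on I, then there exists a nondegenerate compact subinterval [u,v] ⊆ I on which f is Lebesgue integrable. -/

import Mathlib

/-!
Cover `I` by the countably many sets `uniformControlSet α F f φ k m` of points `y` with
`|f y| ≤ k` at which the control estimate holds with constant `1` on the ball of radius
`1 / (m + 1)`. By the Baire category theorem one of them is dense in some `[u, v] ⊆ I`.
The monotone function `φ` is differentiable at almost every `x ∈ [u, v]`; there the control
estimate makes `F` differentiable with `F' x = f x`, and comparing `x` with nearby points `y`
of the dense set, where `|F x - F y - f y (x - y)| ≤ |φ (y + α (x - y)) - φ y| ≈ α φ' x |x - y|`,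
gives `|f x| ≤ k + α φ' x`. As `φ'` is integrable on `[u, v]` and `f = F'` a.e., so is `f`.
-/

open Filter Set Topology MeasureTheory

/-- `φ` is an `α`-control function for the pair `(F, f)` on the interval `I`:
`φ` is strictly increasing on `I` and for every `x ∈ I`,
`(F y - F x - f x (y - x)) / (φ (x + α (y - x)) - φ x) → 0` as `y → x` within `I \ {x}`. -/
def IsControlFn (α : ℝ) (I : Set ℝ) (F f φ : ℝ → ℝ) : Prop :=
  StrictMonoOn φ I ∧ ∀ x ∈ I,
    Tendsto (fun y => (F y - F x - f x * (y - x)) / (φ (x + α * (y - x)) - φ x))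
      (𝓝[I \ {x}] x) (𝓝 0)

/-- `F` is an indefinite `MC^α` integral of `f` on `I`. -/
def IsMCIntegral (α : ℝ) (I : Set ℝ) (F f : ℝ → ℝ) : Prop :=
  ∃ φ : ℝ → ℝ, IsControlFn α I F f φ

open Asymptotics Metric

theorem IsOpen.exists_isOpen_subset_closure_of_subset_iUnion {X ι : Type*} [TopologicalSpace X]
    [BaireSpace X] [Countable ι] {U : Set X} (hU : IsOpen U) (hne : U.Nonempty)
    {A : ι → Set X} (hA : U ⊆ ⋃ i, A i) :
    ∃ i, ∃ W, IsOpen W ∧ W.Nonempty ∧ W ⊆ U ∩ closure (A i) := by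
  obtain ⟨i₀, -⟩ := mem_iUnion.1 (hA hne.some_mem)
  have hcover : ⋃ i, (closure (A i) ∪ Uᶜ) = univ := by
    refine eq_univ_of_forall fun x => ?_
    by_cases hx : x ∈ U
    · obtain ⟨i, hi⟩ := mem_iUnion.1 (hA hx)
      exact mem_iUnion.2 ⟨i, Or.inl (subset_closure hi)⟩
    · exact mem_iUnion.2 ⟨i₀, Or.inr hx⟩
  obtain ⟨p, hpU, hp⟩ := (dense_iUnion_interior_of_closed
    (fun i => isClosed_closure.union hU.isClosed_compl) hcover).inter_open_nonempty U hU hne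
  obtain ⟨i, hi⟩ := mem_iUnion.1 hp
  refine ⟨i, U ∩ interior (closure (A i) ∪ Uᶜ), hU.inter isOpen_interior, ⟨p, hpU, hi⟩, ?_⟩
  rintro x ⟨hxU, hx⟩
  exact ⟨hxU, (interior_subset hx).resolve_right (not_not.2 hxU)⟩

theorem IsOpen.exists_Icc_subset {X : Type*} [LinearOrder X] [TopologicalSpace X]
    [OrderTopology X] [DenselyOrdered X] [Nontrivial X] {s : Set X} (hs : IsOpen s)
    (hne : s.Nonempty) : ∃ u v, u < v ∧ Icc u v ⊆ s := by
  obtain ⟨a, b, hab, hsub⟩ := hs.exists_Ioo_subset hne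
  obtain ⟨u, hau, hub⟩ := exists_between hab
  obtain ⟨v, huv, hvb⟩ := exists_between hub
  exact ⟨u, v, huv, (Icc_subset_Ioo hau hvb).trans hsub⟩

theorem le_of_eventually_mul_abs_le_add {x a K : ℝ} {S : Set ℝ} {e : ℝ → ℝ}
    (hx : (𝓝[S \ {x}] x).NeBot) (he : e =o[𝓝 x] fun y => y - x)
    (h : ∀ᶠ y in 𝓝[S] x, a * |y - x| ≤ K * |y - x| + e y) : a ≤ K := by
  refine le_of_forall_pos_le_add fun ε hε => ?_
  have hev : ∀ᶠ y in 𝓝[S \ {x}] x, y ≠ x ∧ a * |y - x| ≤ (K + ε) * |y - x| := by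
    filter_upwards [nhdsWithin_mono x sdiff_subset h, nhdsWithin_le_nhds (he.bound hε),
      self_mem_nhdsWithin] with y hy he hyS
    simp only [Real.norm_eq_abs] at he
    exact ⟨hyS.2, by linarith [le_abs_self (e y)]⟩
  obtain ⟨y, hyx, hy⟩ := hev.exists
  exact le_of_mul_le_mul_right hy (abs_pos.2 (sub_ne_zero.2 hyx))

theorem tendsto_affine_nhds (x s : ℝ) : Tendsto (fun y => x + s * (y - x)) (𝓝 x) (𝓝 x) := by
  have : Continuous fun y : ℝ => x + s * (y - x) := by fun_prop
  simpa using this.tendsto x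

theorem isBigO_affine_sub (x s : ℝ) :
    (fun y => x + s * (y - x) - x) =O[𝓝 x] fun y => y - x :=
  ((isBigO_refl _ _).const_mul_left s).congr_left fun y => by ring

theorem HasDerivAt.isLittleO_comp_affine {φ : ℝ → ℝ} {g x : ℝ} (hφ : HasDerivAt φ g x) (s : ℝ) :
    (fun y => φ (x + s * (y - x)) - φ x - s * (y - x) * g) =o[𝓝 x] fun y => y - x :=
  (((hasDerivAt_iff_isLittleO.1 hφ).comp_tendsto (tendsto_affine_nhds x s)).trans_isBigO
    (isBigO_affine_sub x s)).congr_left fun y => by simp only [Function.comp, smul_eq_mul]; ring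

theorem abs_le_of_mem_closure_of_hasDerivAt {F f φ : ℝ → ℝ} {α g C x : ℝ} {S : Set ℝ}
    (hF : HasDerivAt F (f x) x) (hφ : HasDerivAt φ g x) (hx : x ∈ closure S)
    (hS : ∀ᶠ y in 𝓝[S] x,
      |f y| ≤ C ∧ |F x - F y - f y * (x - y)| ≤ |φ (y + α * (x - y)) - φ y|) :
    |f x| ≤ C + |α * g| := by
  by_cases hxS : x ∈ S
  · exact (hS.self_of_nhdsWithin hxS).1.trans (le_add_of_nonneg_right (abs_nonneg _))
  have hne : (𝓝[S \ {x}] x).NeBot := by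
    rwa [sdiff_singleton_eq_self hxS, ← mem_closure_iff_nhdsWithin_neBot]
  set eF := fun y => F y - F x - f x * (y - x)
  set eφ := fun y => φ (y + α * (x - y)) - φ y - α * (x - y) * g
  have heF : eF =o[𝓝 x] fun y => y - x :=
    (hasDerivAt_iff_isLittleO.1 hF).congr_left fun y => by simp only [eF, smul_eq_mul]; ring
  -- `y + α (x - y) = x + (1 - α) (y - x)`
  have heφ : eφ =o[𝓝 x] fun y => y - x :=
    ((hφ.isLittleO_comp_affine (1 - α)).sub (hφ.isLittleO_comp_affine 1)).congr_left
      fun y => by simp only [eφ]; ring_nf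
  refine le_of_eventually_mul_abs_le_add hne (heF.norm_left.add heφ.norm_left) ?_
  filter_upwards [hS] with y ⟨hfy, hy⟩
  have hsplit : |f x| * |x - y| ≤ |F x - F y - f y * (x - y)| + |f y| * |x - y| + |eF y| := by
    rw [← abs_mul, ← abs_mul]
    refine (abs_add_three _ _ _).trans_eq' (congr_arg _ ?_)
    simp only [eF]; ring
  have hφsplit : |φ (y + α * (x - y)) - φ y| ≤ |α * g| * |x - y| + |eφ y| := by
    rw [← abs_mul]
    refine (abs_add_le _ _).trans_eq' (congr_arg _ ?_)
    simp only [eφ]; ring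
  have hfy' : |f y| * |x - y| ≤ C * |x - y| := mul_le_mul_of_nonneg_right hfy (abs_nonneg _)
  rw [abs_sub_comm x y] at hsplit hφsplit hfy'
  simp only [Real.norm_eq_abs]
  linarith

def uniformControlSet (α : ℝ) (F f φ : ℝ → ℝ) (k m : ℕ) : Set ℝ :=
  {y | |f y| ≤ k ∧ ∀ x ∈ ball y (1 / (m + 1)),
    |F x - F y - f y * (x - y)| ≤ |φ (y + α * (x - y)) - φ y|}

namespace IsControlFn

variable {α : ℝ} {I : Set ℝ} {F f φ : ℝ → ℝ}

theorem isLittleO (h : IsControlFn α I F f φ) (hα : α ≠ 0) (hI : IsOpen I) {x : ℝ} (hx : x ∈ I) :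
    (fun y => F y - F x - f x * (y - x)) =o[𝓝 x] fun y => φ (x + α * (y - x)) - φ x := by
  have hden : ∀ᶠ y in 𝓝[I \ {x}] x, φ (x + α * (y - x)) - φ x ≠ 0 := by
    filter_upwards [nhdsWithin_le_nhds ((tendsto_affine_nhds x α).eventually (hI.mem_nhds hx)),
      self_mem_nhdsWithin] with y hz hy
    refine sub_ne_zero.2 fun heq => hy.2 ?_
    simpa [hα, sub_eq_zero] using h.1.injOn hz hx heq
  have hlo := (isLittleO_iff_tendsto' (hden.mono fun y hy h0 => absurd h0 hy)).2 (h.2 x hx)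
  rwa [← isLittleO_insert (by simp), insert_sdiff_singleton, insert_eq_of_mem hx,
    hI.nhdsWithin_eq hx] at hlo

theorem hasDerivAt (h : IsControlFn α I F f φ) (hα : α ≠ 0) (hI : IsOpen I) {x g : ℝ}
    (hx : x ∈ I) (hφ : HasDerivAt φ g x) : HasDerivAt F (f x) x := by
  rw [hasDerivAt_iff_isLittleO]
  exact ((h.isLittleO hα hI hx).trans_isBigO ((hφ.isBigO_sub.comp_tendsto
    (tendsto_affine_nhds x α)).trans (isBigO_affine_sub x α))).congr_left
    fun y => by rw [smul_eq_mul, mul_comm]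


theorem subset_iUnion_uniformControlSet (h : IsControlFn α I F f φ) (hα : α ≠ 0)
    (hI : IsOpen I) : I ⊆ ⋃ km : ℕ × ℕ, uniformControlSet α F f φ km.1 km.2 := by
  intro y hy
  have hev : ∀ᶠ x in 𝓝 y, |F x - F y - f y * (x - y)| ≤ |φ (y + α * (x - y)) - φ y| := by
    filter_upwards [(h.isLittleO hα hI hy).bound one_pos] with x hx
    simpa only [Real.norm_eq_abs, one_mul] using hx
  obtain ⟨m, -, hm⟩ := nhds_basis_ball_inv_nat_succ.eventually_iff.1 hev
  exact mem_iUnion.2 ⟨(⌈|f y|⌉₊, m), Nat.le_ceil _, hm⟩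

theorem abs_le_of_mem_closure (h : IsControlFn α I F f φ) (hα : α ≠ 0) (hI : IsOpen I)
    {k m : ℕ} {x g : ℝ} (hxI : x ∈ I) (hx : x ∈ closure (uniformControlSet α F f φ k m))
    (hφ : HasDerivAt φ g x) : |f x| ≤ k + |α * g| := by
  refine abs_le_of_mem_closure_of_hasDerivAt (h.hasDerivAt hα hI hxI hφ) hφ hx ?_
  filter_upwards [self_mem_nhdsWithin,
    nhdsWithin_le_nhds (ball_mem_nhds x Nat.one_div_pos_of_nat)] with y hy hxy
  exact ⟨hy.1, hy.2 x (mem_ball_comm.1 hxy)⟩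

theorem integrableOn_Icc (h : IsControlFn α I F f φ) (hα : α ≠ 0) (hI : IsOpen I) {k m : ℕ}
    {u v : ℝ} (huv : u ≤ v) (hsub : Icc u v ⊆ I ∩ closure (uniformControlSet α F f φ k m)) :
    IntegrableOn f (Icc u v) := by
  have hφ : ∀ᵐ x, x ∈ I → HasDerivAt φ (deriv φ x) x := by
    filter_upwards [h.1.monotoneOn.ae_differentiableWithinAt_of_mem] with x hx hxI
    exact ((hx hxI).differentiableAt (hI.mem_nhds hxI)).hasDerivAt
  have hae : ∀ᵐ x ∂volume.restrict (Icc u v),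
      HasDerivAt F (f x) x ∧ |f x| ≤ k + |α * deriv φ x| := by
    rw [ae_restrict_iff' measurableSet_Icc]
    filter_upwards [hφ] with x hx hxuv
    obtain ⟨hxI, hxcl⟩ := hsub hxuv
    exact ⟨h.hasDerivAt hα hI hxI (hx hxI), h.abs_le_of_mem_closure hα hI hxI hxcl (hx hxI)⟩
  have hderiv : IntegrableOn (deriv φ) (Icc u v) := by
    rw [← intervalIntegrable_iff_integrableOn_Icc_of_le huv]
    refine MonotoneOn.intervalIntegrable_deriv (h.1.monotoneOn.mono ?_)
    rw [uIcc_of_le huv]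
    exact fun x hx => (hsub hx).1
  refine Integrable.mono' ((integrableOn_const (C := (k : ℝ)) measure_Icc_lt_top.ne).add
    (hderiv.const_mul α).abs) ?_ ?_
  · refine (measurable_deriv F).aestronglyMeasurable.congr ?_
    filter_upwards [hae] with x hx using hx.1.deriv
  · filter_upwards [hae] with x hx using (Real.norm_eq_abs _).trans_le hx.2

end IsControlFn

theorem stmt_12_general (α : ℝ) (hα : 0 < α) (I : Set ℝ) (hIopen : IsOpen I)
    (hIne : I.Nonempty) (f : ℝ → ℝ)
    (hf : ∃ F : ℝ → ℝ, IsMCIntegral α I F f) :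
    ∃ u v : ℝ, u < v ∧ Set.Icc u v ⊆ I ∧
      MeasureTheory.IntegrableOn f (Set.Icc u v) := by
  obtain ⟨F, φ, h⟩ := hf
  obtain ⟨⟨k, m⟩, W, hWopen, hWne, hW⟩ := hIopen.exists_isOpen_subset_closure_of_subset_iUnion
    hIne (h.subset_iUnion_uniformControlSet hα.ne' hIopen)
  obtain ⟨u, v, huv, huvW⟩ := hWopen.exists_Icc_subset hWne
  exact ⟨u, v, huv, huvW.trans (hW.trans inter_subset_left),
    h.integrableOn_Icc hα.ne' hIopen huv.le (huvW.trans hW)⟩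

/-- If `f` is `MC^α` integrable on an open interval `I`, then `f` is Lebesgue
integrable on some nondegenerate compact subinterval of `I`. -/
theorem stmt_12 (α : ℝ) (hα : 0 < α) (I : Set ℝ) (hIopen : IsOpen I)
    (hIconn : I.OrdConnected) (hIne : I.Nonempty) (f : ℝ → ℝ)
    (hf : ∃ F : ℝ → ℝ, IsMCIntegral α I F f) :
    ∃ u v : ℝ, u < v ∧ Set.Icc u v ⊆ I ∧
      MeasureTheory.IntegrableOn f (Set.Icc u v) :=
  stmt_12_general α hα I hIopen hIne f hf
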